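/- arXiv:2510.12242 — 3 statements merged into one kernel-verified Lean document; each statement's English description precedes it below -/
import Mathlib

section
/- Let V ≥ 0 be a (possibly unbounded) self-adjoint operator on H, and let {γ_n} be a sequence of positive trace-class operators converging in the weak-* topology of S₁(H) (i.e., Tr(Kγ_n) → Tr(Kγ) for every compact K) to a positive trace-class operator γ. Then Tr(Vγ) ≤ liminf_n Tr(Vγ_n). -/
open scoped ENNReal
open Filter

noncomputable section

variable {H : Type*} [NormedAddCommGroup H] [InnerProductSpace ℂ H] [CompleteSpace H]

/-- The rank-one operator `|φ⟩⟨φ| : ξ ↦ φ ⟨φ, ξ⟩`. -/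
def rankOne (φ : H) : H →L[ℂ] H := (innerSL ℂ φ).smulRight φ

/-- The absolute value `|A| = √(A⋆A)` of a bounded operator. -/
def absOp (A : H →L[ℂ] H) : H →L[ℂ] H := CFC.sqrt (star A * A)

variable {ι : Type*} [Countable ι]

/-- The trace computed along a Hilbert basis. -/
def traceAlong (e : HilbertBasis ι ℂ H) (A : H →L[ℂ] H) : ℝ :=
  ∑' n, (inner ℂ (e n) (A (e n)) : ℂ).re

/-- Summability of the diagonal along a Hilbert basis. -/
def diagSummable (e : HilbertBasis ι ℂ H) (A : H →L[ℂ] H) : Prop :=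
  Summable fun n => (inner ℂ (e n) (A (e n)) : ℂ).re

/-- The trace norm `Tr |A|`. -/
def trNorm (e : HilbertBasis ι ℂ H) (A : H →L[ℂ] H) : ℝ := traceAlong e (absOp A)

/-- `A` is trace class: the diagonal of `|A|` is summable. -/
def IsTraceClass (e : HilbertBasis ι ℂ H) (A : H →L[ℂ] H) : Prop :=
  diagSummable e (absOp A)

/-- A positive (possibly unbounded) self-adjoint operator on `H`, encoded as a densely
defined symmetric positive linear partial map together with its everywhere-defined bounded
resolvent family `res ε = (1 + ε T)⁻¹`, `ε > 0` (whose existence characterizes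
self-adjointness for positive symmetric operators). -/
structure PosSAOp (H : Type*) [NormedAddCommGroup H] [InnerProductSpace ℂ H]
    [CompleteSpace H] where
  toPMap : H →ₗ.[ℂ] H
  dense_domain : Dense (toPMap.domain : Set H)
  symmetric : ∀ x y : toPMap.domain, (inner ℂ (x : H) (toPMap y) : ℂ) = inner ℂ (toPMap x : H) (y : H)
  nonneg : ∀ x : toPMap.domain, 0 ≤ (inner ℂ (x : H) (toPMap x) : ℂ).re
  res : ℝ → H →L[ℂ] H
  res_mem : ∀ ε, 0 < ε → ∀ x : H, res ε x ∈ toPMap.domain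
  res_spec : ∀ (ε : ℝ) (hε : 0 < ε) (x : H),
    res ε x + ε • toPMap ⟨res ε x, res_mem ε hε x⟩ = x

/-- The bounded monotone approximation `T_ε = T(1+εT)⁻¹ = ε⁻¹ (1 - (1+εT)⁻¹)`. -/
def PosSAOp.approx (S : PosSAOp H) (ε : ℝ) : H →L[ℂ] H :=
  ε⁻¹ • (ContinuousLinearMap.id ℂ H - S.res ε)

/-- The extended trace `Tr(Tγ) := sup_{ε>0} Tr(T_ε γ) ∈ [0,∞]`. -/
def extTrace (e : HilbertBasis ι ℂ H) (S : PosSAOp H) (γ : H →L[ℂ] H) : ℝ≥0∞ :=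
  ⨆ (ε : ℝ) (_ : 0 < ε), ENNReal.ofReal (traceAlong e (S.approx ε * γ))

/-- Membership in the form domain `Q(T)`: `φ ∈ Q(T)` iff `Tr(T|φ⟩⟨φ|) < ∞`. -/
def memFormDomain (e : HilbertBasis ι ℂ H) (S : PosSAOp H) (φ : H) : Prop :=
  extTrace e S (rankOne φ) ≠ ⊤

/-- The cone `X⁺` of positive trace-class operators with finite kinetic energy. -/
def Xpos (e : HilbertBasis ι ℂ H) (S : PosSAOp H) : Set (H →L[ℂ] H) :=
  {γ | γ.IsPositive ∧ diagSummable e γ ∧ extTrace e S γ ≠ ⊤}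

/-- The space `X = X⁺ - X⁺`. -/
def Xset (e : HilbertBasis ι ℂ H) (S : PosSAOp H) : Set (H →L[ℂ] H) :=
  {γ | ∃ p ∈ Xpos e S, ∃ m ∈ Xpos e S, γ = p - m}

/-- The `X`-norm `‖γ‖_X = inf {Tr((1+T)γ⁺) + Tr((1+T)γ⁻) : γ = γ⁺ - γ⁻, γ^± ∈ S₁⁺}`,
with value `∞` when no finite decomposition exists. -/
def Xnorm (e : HilbertBasis ι ℂ H) (S : PosSAOp H) (γ : H →L[ℂ] H) : ℝ≥0∞ :=
  ⨅ (pm : (H →L[ℂ] H) × (H →L[ℂ] H)) (_ : pm.1.IsPositive ∧ pm.2.IsPositive ∧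
      diagSummable e pm.1 ∧ diagSummable e pm.2 ∧ γ = pm.1 - pm.2),
    (ENNReal.ofReal (traceAlong e pm.1) + extTrace e S pm.1
      + ENNReal.ofReal (traceAlong e pm.2) + extTrace e S pm.2)

/-! Fix `ε > 0`; then `T = V_ε` is bounded and positive. With `B = √T`, cyclicity of the trace
for Hilbert–Schmidt operators gives `Tr(T γ) = ∑ⱼ ⟨B eⱼ, γ B eⱼ⟩`, a series of nonnegative terms.
Each finite partial sum is `Tr(K γ)` for the finite-rank, hence compact, operator
`K = ∑ⱼ∈s |B eⱼ⟩⟨B eⱼ|`, so it passes to the weak-* limit, and Fatou's lemma for series gives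
`Tr(T γ) ≤ liminf Tr(T γₙ) ≤ liminf Tr(V γₙ)`. Taking the supremum over `ε` concludes. -/

open scoped InnerProductSpace

section TraceClass

open ContinuousLinearMap

omit [Countable ι] [CompleteSpace H]

theorem HilbertBasis.hasSum_norm_inner_sq (e : HilbertBasis ι ℂ H) (x : H) :
    HasSum (fun i => ‖⟪e i, x⟫_ℂ‖ ^ 2) (‖x‖ ^ 2) := by
  have h := e.hasSum_inner_mul_inner x x
  rw [inner_self_eq_norm_sq_to_K] at h
  simp_rw [← inner_conj_symm x (e _), RCLike.conj_mul] at h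
  exact_mod_cast h

def IsHilbertSchmidt (e : HilbertBasis ι ℂ H) (X : H →L[ℂ] H) : Prop :=
  Summable fun i => ‖X (e i)‖ ^ 2

variable {e : HilbertBasis ι ℂ H}

theorem IsHilbertSchmidt.summable_norm_inner_sq {X : H →L[ℂ] H} (hX : IsHilbertSchmidt e X) :
    Summable fun p : ι × ι => ‖⟪e p.1, X (e p.2)⟫_ℂ‖ ^ 2 := by
  rw [← (Equiv.prodComm ι ι).summable_iff]
  refine (summable_prod_of_nonneg fun _ => sq_nonneg _).2 ⟨fun j => ?_, ?_⟩
  · exact (e.hasSum_norm_inner_sq (X (e j))).summable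
  · exact hX.congr fun j => (e.hasSum_norm_inner_sq (X (e j))).tsum_eq.symm

theorem IsHilbertSchmidt.mul_left (A : H →L[ℂ] H) {X : H →L[ℂ] H} (hX : IsHilbertSchmidt e X) :
    IsHilbertSchmidt e (A * X) := by
  refine .of_nonneg_of_le (fun _ => sq_nonneg _) (fun j => ?_) (Summable.mul_left (‖A‖ ^ 2) hX)
  rw [← mul_pow]
  exact pow_le_pow_left₀ (norm_nonneg _) (A.le_opNorm _) 2

theorem isCompactOperator_rankOne (φ : H) : IsCompactOperator (rankOne φ) :=
  (isCompactOperator_of_locallyCompactSpace_dom (innerSL ℂ φ)).clm_comp (toSpanSingleton ℂ φ)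

theorem isCompactOperator_sum_rankOne {κ : Type*} (s : Finset κ) (φ : κ → H) :
    IsCompactOperator ⇑(∑ j ∈ s, rankOne (φ j)) :=
  (compactOperator (RingHom.id ℂ) H H).sum_mem fun j _ => isCompactOperator_rankOne (φ j)

variable [CompleteSpace H]

theorem IsHilbertSchmidt.adjoint {X : H →L[ℂ] H} (hX : IsHilbertSchmidt e X) :
    IsHilbertSchmidt e (ContinuousLinearMap.adjoint X) := by
  refine hX.summable_norm_inner_sq.prod.congr fun k => ?_
  rw [← (e.hasSum_norm_inner_sq (ContinuousLinearMap.adjoint X (e k))).tsum_eq]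
  simp [adjoint_inner_right, norm_inner_symm]

theorem IsHilbertSchmidt.hasSum_inner_mul_comm {X Y : H →L[ℂ] H} (hX : IsHilbertSchmidt e X)
    (hY : IsHilbertSchmidt e Y) :
    HasSum (fun k => ⟪e k, (X * Y) (e k)⟫_ℂ) (∑' k, ⟪e k, (Y * X) (e k)⟫_ℂ) := by
  set F : ι × ι → ℂ := fun p => ⟪e p.1, X (e p.2)⟫_ℂ * ⟪e p.2, Y (e p.1)⟫_ℂ
  have hY' : Summable fun p : ι × ι => ‖⟪e p.2, Y (e p.1)⟫_ℂ‖ ^ 2 :=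
    hY.summable_norm_inner_sq.prod_symm
  have hF : Summable F := by
    refine .of_norm_bounded (hX.summable_norm_inner_sq.add hY') fun p => ?_
    rw [norm_mul]
    nlinarith [norm_nonneg (⟪e p.1, X (e p.2)⟫_ℂ), norm_nonneg (⟪e p.2, Y (e p.1)⟫_ℂ)]
  have hrow : ∀ k, HasSum (fun j => F (k, j)) ⟪e k, (X * Y) (e k)⟫_ℂ := fun k => by
    simpa [F, adjoint_inner_left] using
      e.hasSum_inner_mul_inner (ContinuousLinearMap.adjoint X (e k)) (Y (e k))
  have hcol : ∀ j, HasSum (fun k => F (k, j)) ⟪e j, (Y * X) (e j)⟫_ℂ := fun j => by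
    simpa [F, adjoint_inner_left, mul_comm] using
      e.hasSum_inner_mul_inner (ContinuousLinearMap.adjoint Y (e j)) (X (e j))
  convert hF.hasSum.prod_fiberwise hrow using 1
  calc ∑' j, ⟪e j, (Y * X) (e j)⟫_ℂ = ∑' j, ∑' k, F (k, j) :=
        tsum_congr fun j => (hcol j).tsum_eq.symm
    _ = ∑' k, ∑' j, F (k, j) := hF.tsum_comm (f := fun k j => F (k, j))
    _ = ∑' p, F p := hF.tsum_prod.symm

variable (e)

theorem IsHilbertSchmidt.sqrt_of_diagSummable {g : H →L[ℂ] H} (hg : g.IsPositive)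
    (hgs : diagSummable e g) : IsHilbertSchmidt e (CFC.sqrt g) := by
  have hC := (nonneg_iff_isPositive _).1 (CFC.sqrt_nonneg g)
  refine hgs.congr fun j => ?_
  conv_lhs => rw [← CFC.sqrt_mul_sqrt_self g ((nonneg_iff_isPositive g).2 hg)]
  rw [mul_apply_eq_comp, ← hC.inner_left_eq_inner_right, inner_self_eq_norm_sq_to_K]
  norm_cast

theorem hasSum_re_inner_sqrt_traceAlong_mul {T g : H →L[ℂ] H} (hT : T.IsPositive)
    (hg : g.IsPositive) (hgs : diagSummable e g) :
    HasSum (fun j => (⟪CFC.sqrt T (e j), g (CFC.sqrt T (e j))⟫_ℂ).re) (traceAlong e (T * g)) := by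
  set B := CFC.sqrt T
  set C := CFC.sqrt g
  have hBB : B * B = T := CFC.sqrt_mul_sqrt_self T ((nonneg_iff_isPositive T).2 hT)
  have hCC : C * C = g := CFC.sqrt_mul_sqrt_self g ((nonneg_iff_isPositive g).2 hg)
  have hB : B.IsPositive := (nonneg_iff_isPositive B).1 (CFC.sqrt_nonneg T)
  have hC : C.IsPositive := (nonneg_iff_isPositive C).1 (CFC.sqrt_nonneg g)
  have hCHS : IsHilbertSchmidt e C := .sqrt_of_diagSummable e hg hgs
  have hBC : IsHilbertSchmidt e (B * C) := hCHS.mul_left B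
  have hCB : IsHilbertSchmidt e (C * B) := by
    simpa [← star_eq_adjoint, star_mul, hB.isSelfAdjoint.star_eq, hC.isSelfAdjoint.star_eq]
      using hBC.adjoint
  -- `Tr(T g) = Tr(C T C) = Tr((C B)(B C)) = Tr((B C)(C B))`
  have hTg := (hCHS.mul_left T).hasSum_inner_mul_comm hCHS
  rw [mul_assoc, hCC, show C * (T * C) = C * B * (B * C) by rw [← hBB]; noncomm_ring] at hTg
  have hBgB := hBC.hasSum_inner_mul_comm hCB
  rw [traceAlong, (Complex.hasSum_re hTg).tsum_eq]
  refine (Complex.hasSum_re hBgB).congr_fun fun j => ?_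
  simp only [mul_apply_eq_comp]
  rw [← hB.inner_left_eq_inner_right, ← hCC, mul_apply_eq_comp]

theorem traceAlong_sum_rankOne_mul {κ : Type*} (s : Finset κ) (φ : κ → H) {A : H →L[ℂ] H}
    (hA : IsSelfAdjoint A) :
    traceAlong e ((∑ j ∈ s, rankOne (φ j)) * A) = ∑ j ∈ s, (⟪φ j, A (φ j)⟫_ℂ).re := by
  have hsum := hasSum_sum fun j (_ : j ∈ s) => e.hasSum_inner_mul_inner (A (φ j)) (φ j)
  have hdiag : ∀ k, ⟪e k, ((∑ j ∈ s, rankOne (φ j)) * A) (e k)⟫_ℂ =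
      ∑ j ∈ s, ⟪A (φ j), e k⟫_ℂ * ⟪e k, φ j⟫_ℂ := fun k => by
    simp [rankOne, sum_apply, ← adjoint_inner_right, hA.adjoint_eq]
  rw [traceAlong, (Complex.hasSum_re (hsum.congr_fun hdiag)).tsum_eq, Complex.re_sum]
  simp [← adjoint_inner_right, hA.adjoint_eq]

end TraceClass

namespace PosSAOp

open ContinuousLinearMap

omit [Countable ι]

variable (S : PosSAOp H) {ε : ℝ}

theorem approx_apply (hε : 0 < ε) (x : H) :
    S.approx ε x = S.toPMap ⟨S.res ε x, S.res_mem ε hε x⟩ := by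
  rw [approx, smul_apply, sub_apply, id_apply, ← eq_sub_of_add_eq' (S.res_spec ε hε x), smul_smul,
    inv_mul_cancel₀ hε.ne', one_smul]

theorem approx_isPositive (hε : 0 < ε) : (S.approx ε).IsPositive := by
  have hsplit (x : H) := S.res_spec ε hε x
  simp only [RCLike.real_smul_eq_coe_smul (K := ℂ)] at hsplit
  refine ⟨fun x y => ?_, fun x => ?_⟩
  · simp only [coe_coe, S.approx_apply hε]
    conv_lhs => rw [← hsplit y]
    conv_rhs => rw [← hsplit x]
    simp only [inner_add_left, inner_add_right, inner_smul_real_left, inner_smul_real_right]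
    congr 1
    exact (S.symmetric ⟨_, S.res_mem ε hε x⟩ ⟨_, S.res_mem ε hε y⟩).symm
  · set u : S.toPMap.domain := ⟨S.res ε x, S.res_mem ε hε x⟩
    have hx := (hsplit x).symm
    rw [reApplyInnerSelf_apply, S.approx_apply hε]
    calc 0 ≤ RCLike.re ⟪S.toPMap u, u⟫_ℂ + ε * ‖S.toPMap u‖ ^ 2 :=
          add_nonneg (by rw [inner_re_symm]; exact S.nonneg u) (by positivity)
      _ = RCLike.re ⟪S.toPMap u, x⟫_ℂ := by
          rw [hx, inner_add_right, inner_smul_real_right, map_add, RCLike.smul_re]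
          exact congrArg _ (congrArg _ (inner_self_eq_norm_sq _).symm)

theorem ofReal_traceAlong_approx_mul_le_extTrace (e : HilbertBasis ι ℂ H) (hε : 0 < ε)
    (γ : H →L[ℂ] H) : ENNReal.ofReal (traceAlong e (S.approx ε * γ)) ≤ extTrace e S γ :=
  le_iSup₂ (f := fun ε (_ : 0 < ε) => ENNReal.ofReal (traceAlong e (S.approx ε * γ))) ε hε

end PosSAOp

theorem ENNReal.ofReal_tsum_le_liminf {κ : Type*} {f : κ → ℝ} {a : ℕ → κ → ℝ} {b : ℕ → ℝ≥0∞}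
    (hf : ∀ j, 0 ≤ f j) (hfs : Summable f)
    (hfin : ∀ s : Finset κ, Tendsto (fun n => ∑ j ∈ s, a n j) atTop (nhds (∑ j ∈ s, f j)))
    (hle : ∀ s n, ENNReal.ofReal (∑ j ∈ s, a n j) ≤ b n) :
    ENNReal.ofReal (∑' j, f j) ≤ liminf b atTop := by
  rw [ENNReal.ofReal_tsum_of_nonneg hf hfs, ENNReal.tsum_eq_iSup_sum]
  refine iSup_le fun s => ?_
  rw [← ENNReal.ofReal_sum_of_nonneg fun j _ => hf j,
    ← ((ENNReal.continuous_ofReal.tendsto _).comp (hfin s)).liminf_eq]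
  exact liminf_le_liminf (.of_forall (hle s))

/-- Weak-* lower semicontinuity of the extended trace `Tr(V·)` on positive
trace-class operators. -/
theorem extTrace_le_liminf_of_weakStar (e : HilbertBasis ι ℂ H) (V : PosSAOp H)
    (γ : ℕ → H →L[ℂ] H) (γlim : H →L[ℂ] H)
    (hpos : ∀ n, (γ n).IsPositive) (hs : ∀ n, diagSummable e (γ n))
    (hposl : γlim.IsPositive) (hsl : diagSummable e γlim)
    (hconv : ∀ K : H →L[ℂ] H, IsCompactOperator K →
      Tendsto (fun n => traceAlong e (K * γ n)) atTop (nhds (traceAlong e (K * γlim)))) :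
    extTrace e V γlim ≤ Filter.liminf (fun n => extTrace e V (γ n)) atTop := by
  refine iSup₂_le fun ε hε => ?_
  have hT := V.approx_isPositive hε
  have hnonneg {g : H →L[ℂ] H} (hg : g.IsPositive) (x : H) : 0 ≤ (⟪x, g x⟫_ℂ).re :=
    hg.re_inner_nonneg_right x
  have hlim := hasSum_re_inner_sqrt_traceAlong_mul e hT hposl hsl
  set B := CFC.sqrt (V.approx ε)
  rw [← hlim.tsum_eq]
  refine ENNReal.ofReal_tsum_le_liminf (a := fun n j => (⟪B (e j), γ n (B (e j))⟫_ℂ).re)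
    (fun j => hnonneg hposl _) hlim.summable (fun s => ?_) fun s n => ?_
  · -- the partial sums are traces against the compact operators `∑ⱼ∈s |√T eⱼ⟩⟨√T eⱼ|`
    simpa only [traceAlong_sum_rankOne_mul e s _ hposl.isSelfAdjoint,
      traceAlong_sum_rankOne_mul e s _ (hpos _).isSelfAdjoint] using
      hconv _ (isCompactOperator_sum_rankOne s fun j => B (e j))
  · refine (ENNReal.ofReal_le_ofReal ?_).trans (V.ofReal_traceAlong_approx_mul_le_extTrace e hε _)
    exact sum_le_hasSum s (fun j _ => hnonneg (hpos n) _)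
      (hasSum_re_inner_sqrt_traceAlong_mul e hT (hpos n) (hs n))
end
end

section
/- Let t be a closed lower-semibounded Hermitian form with associated self-adjoint operator T, let w be a Hermitian form with infinitesimal t-bound, and v a Hermitian form with t-bound a_v < 1 (both with domain containing Q(T)). Then: (1) v + w has t-bound < 1; (2) v has (t+w)-bound < 1; (3) w has infinitesimal (t+v)-bound; and the form sums T∔(v+w), (T∔v)∔w, and (T∔w)∔v all coincide and are lower semibounded self-adjoint operators. -/
/-!
The relative bounds are elementary. The one that needs care is that a `t`-bound `c (1 - ε)`
becomes a `(t + w)`-bound `c` when `w` has `t`-bound `ε`, because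
`(1 - ε) Re t(ψ, ψ) ≤ Re (t + w)(ψ, ψ) + b_w ‖ψ‖²`.

A perturbation `s` with `t`-bound `a < 1` keeps `t` lower semibounded, and the form norms of `t`
and `t + s` are equivalent, so `t + s` is again closed (KLMN). For a closed form `c ≥ -μ`,
`c + (μ + 1)⟪·, ·⟫` is an inner product that makes `Q(T)` a Hilbert space. The Riesz
representation theorem in that space shows that `A + μ + 1` is onto, where `A` is the operator
with graph `{(ψ, χ) | c(·, ψ) = ⟪·, χ⟫ on Q(T)}`. Surjectivity and coercivity then make the
domain of `A` dense. Every operator associated with `c` has exactly this graph, so the three form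
sums coincide.
-/

open scoped ENNReal
open Filter

noncomputable section

variable {H : Type*} [NormedAddCommGroup H] [InnerProductSpace ℂ H] [CompleteSpace H]

variable {ι : Type*} [Countable ι]

/-- `A` is the self-adjoint operator associated (via Kato's first representation theorem)
to the sesquilinear form `c` with form domain `QT`. -/
def IsAssociatedOperator (QT : Submodule ℂ H) (c : H → H → ℂ) (A : H →ₗ.[ℂ] H) : Prop :=
  (A.domain : Set H) ⊆ (QT : Set H) ∧ Dense (A.domain : Set H) ∧
  (∀ (ψ : A.domain) (φ : H), φ ∈ QT → (inner ℂ φ (A ψ) : ℂ) = c φ (ψ : H)) ∧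
  (∀ ψ ∈ QT, ∀ χ : H, (∀ φ ∈ QT, c φ ψ = (inner ℂ φ χ : ℂ)) → ψ ∈ A.domain)


open scoped ComplexConjugate InnerProductSpace Topology

theorem completeSpace_of_tendsto_norm_sq {F : Type*} [NormedAddCommGroup F]
    (h : ∀ u : ℕ → F, (∀ ε > 0, ∃ n₀ : ℕ, ∀ m n, n₀ ≤ m → n₀ ≤ n → ‖u m - u n‖ ^ 2 < ε) →
      ∃ l, Tendsto (fun n => ‖u n - l‖ ^ 2) atTop (𝓝 0)) :
    CompleteSpace F := by
  refine Metric.complete_of_cauchySeq_tendsto fun u hu => ?_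
  obtain ⟨l, hl⟩ := h u fun ε hε => by
    obtain ⟨n₀, hn₀⟩ := Metric.cauchySeq_iff.mp hu (√ε) (Real.sqrt_pos.mpr hε)
    refine ⟨n₀, fun m n hm hn => ?_⟩
    rw [← dist_eq_norm, ← Real.lt_sqrt dist_nonneg]
    exact hn₀ m hm n hn
  refine ⟨l, tendsto_iff_norm_sub_tendsto_zero.mpr ?_⟩
  simpa using hl.sqrt

variable {E : Type*} [NormedAddCommGroup E] [InnerProductSpace ℂ E]

theorem re_ofReal_mul_inner_self (r : ℝ) (ψ : E) : ((r : ℂ) * ⟪ψ, ψ⟫_ℂ).re = r * ‖ψ‖ ^ 2 := by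
  rw [Complex.re_ofReal_mul, ← inner_self_eq_norm_sq (𝕜 := ℂ), RCLike.re_to_complex]

section SesquilinearForms

structure IsSesqFormOn (QT : Submodule ℂ E) (c : E → E → ℂ) : Prop where
  add_right : ∀ ψ φ φ', ψ ∈ QT → φ ∈ QT → φ' ∈ QT → c ψ (φ + φ') = c ψ φ + c ψ φ'
  smul_right : ∀ (a : ℂ) (ψ φ), ψ ∈ QT → φ ∈ QT → c ψ (a • φ) = a * c ψ φ

structure IsHermitianFormOn (QT : Submodule ℂ E) (c : E → E → ℂ) : Prop
    extends IsSesqFormOn QT c where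
  conj_symm : ∀ ψ φ, ψ ∈ QT → φ ∈ QT → c ψ φ = conj (c φ ψ)

variable {QT : Submodule ℂ E} {c d : E → E → ℂ}

theorem IsSesqFormOn.map_zero_right (hc : IsSesqFormOn QT c) {ψ : E} (hψ : ψ ∈ QT) :
    c ψ 0 = 0 := by
  simpa using hc.smul_right 0 ψ 0 hψ QT.zero_mem

namespace IsHermitianFormOn

theorem add_left (hc : IsHermitianFormOn QT c) {ψ φ φ' : E} (hψ : ψ ∈ QT) (hφ : φ ∈ QT)
    (hφ' : φ' ∈ QT) : c (φ + φ') ψ = c φ ψ + c φ' ψ := by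
  rw [hc.conj_symm _ _ (QT.add_mem hφ hφ') hψ, hc.add_right _ _ _ hψ hφ hφ', map_add,
    ← hc.conj_symm _ _ hφ hψ, ← hc.conj_symm _ _ hφ' hψ]

theorem smul_left (hc : IsHermitianFormOn QT c) (a : ℂ) {ψ φ : E} (hψ : ψ ∈ QT)
    (hφ : φ ∈ QT) : c (a • φ) ψ = conj a * c φ ψ := by
  rw [hc.conj_symm _ _ (QT.smul_mem a hφ) hψ, hc.smul_right _ _ _ hψ hφ, map_mul,
    ← hc.conj_symm _ _ hφ hψ]

theorem add (hc : IsHermitianFormOn QT c) (hd : IsHermitianFormOn QT d) :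
    IsHermitianFormOn QT fun ψ φ => c ψ φ + d ψ φ where
  add_right ψ φ φ' hψ hφ hφ' := by
    rw [hc.add_right _ _ _ hψ hφ hφ', hd.add_right _ _ _ hψ hφ hφ']; ring
  smul_right a ψ φ hψ hφ := by
    rw [hc.smul_right _ _ _ hψ hφ, hd.smul_right _ _ _ hψ hφ]; ring
  conj_symm ψ φ hψ hφ := by
    rw [map_add, ← hc.conj_symm _ _ hψ hφ, ← hd.conj_symm _ _ hψ hφ]

end IsHermitianFormOn

theorem isHermitianFormOn_ofReal_mul_inner (r : ℝ) :
    IsHermitianFormOn QT fun ψ φ => (r : ℂ) * ⟪ψ, φ⟫_ℂ where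
  add_right ψ φ φ' _ _ _ := by rw [inner_add_right, mul_add]
  smul_right a ψ φ _ _ := by rw [inner_smul_right, mul_left_comm]
  conj_symm ψ φ _ _ := by rw [map_mul, Complex.conj_ofReal, inner_conj_symm]

end SesquilinearForms

section ClosedForms

/-- `N` plays the role of a squared norm on `QT`. -/
def IsCompleteForSqNorm (QT : Submodule ℂ E) (N : E → ℝ) : Prop :=
  ∀ u : ℕ → E, (∀ n, u n ∈ QT) →
    (∀ ε > 0, ∃ n₀ : ℕ, ∀ m n, n₀ ≤ m → n₀ ≤ n → N (u m - u n) < ε) →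
    ∃ l ∈ QT, Tendsto (fun n => N (u n - l)) atTop (𝓝 0)

def IsClosedSemiboundedForm (QT : Submodule ℂ E) (t : E → E → ℂ) (μ : ℝ) : Prop :=
  (∀ ψ ∈ QT, -μ * ‖ψ‖ ^ 2 ≤ (t ψ ψ).re) ∧
    IsCompleteForSqNorm QT fun ψ => (t ψ ψ).re + (μ + 1) * ‖ψ‖ ^ 2

theorem IsCompleteForSqNorm.of_le {QT : Submodule ℂ E} {N N' : E → ℝ}
    (hN' : IsCompleteForSqNorm QT N') {c C : ℝ} (hc : 0 < c)
    (hlow : ∀ ψ ∈ QT, c * N' ψ ≤ N ψ) (hup : ∀ ψ ∈ QT, N ψ ≤ C * N' ψ) :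
    IsCompleteForSqNorm QT N := by
  intro u hu hcauchy
  obtain ⟨l, hl, hlim⟩ := hN' u hu fun ε hε => by
    obtain ⟨n₀, hn₀⟩ := hcauchy (c * ε) (mul_pos hc hε)
    refine ⟨n₀, fun m n hm hn => lt_of_mul_lt_mul_left ?_ hc.le⟩
    exact (hlow _ (QT.sub_mem (hu m) (hu n))).trans_lt (hn₀ m n hm hn)
  refine ⟨l, hl, tendsto_of_tendsto_of_tendsto_of_le_of_le (by simpa using hlim.const_mul c)
    (by simpa using hlim.const_mul C) (fun n => ?_) (fun n => ?_)⟩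
  · exact hlow _ (QT.sub_mem (hu n) hl)
  · exact hup _ (QT.sub_mem (hu n) hl)

end ClosedForms

section Riesz

/-- A copy of `QT`, to be equipped with the inner product of a coercive form. -/
def FormSpace (QT : Submodule ℂ E) : Type _ := QT

variable {QT : Submodule ℂ E}

namespace FormSpace

instance : AddCommGroup (FormSpace QT) := inferInstanceAs (AddCommGroup QT)

instance : Module ℂ (FormSpace QT) := inferInstanceAs (Module ℂ QT)

def val : FormSpace QT → E := Subtype.val

theorem val_mem (x : FormSpace QT) : x.val ∈ QT := Subtype.property (p := (· ∈ QT)) x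

theorem val_injective : Function.Injective (val : FormSpace QT → E) := Subtype.val_injective

def mk (ψ : E) (hψ : ψ ∈ QT) : FormSpace QT := (⟨ψ, hψ⟩ : QT)

@[simp] theorem val_mk (ψ : E) (hψ : ψ ∈ QT) : (mk ψ hψ).val = ψ := rfl

@[simp] theorem val_sub (x y : FormSpace QT) : (x - y).val = x.val - y.val := rfl

end FormSpace

variable {q : E → E → ℂ}

abbrev IsHermitianFormOn.innerCore (hq : IsHermitianFormOn QT q)
    (hpos : ∀ ψ ∈ QT, ‖ψ‖ ^ 2 ≤ (q ψ ψ).re) : InnerProductSpace.Core ℂ (FormSpace QT) where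
  inner x y := q x.val y.val
  conj_inner_symm x y := (hq.conj_symm _ _ x.val_mem y.val_mem).symm
  re_inner_nonneg x := (sq_nonneg _).trans (hpos _ x.val_mem)
  add_left x y z := hq.add_left z.val_mem x.val_mem y.val_mem
  smul_left x y a := hq.smul_left a y.val_mem x.val_mem
  definite x hx := FormSpace.val_injective <| norm_eq_zero.mp <|
    (pow_eq_zero_iff two_ne_zero).mp <|
      le_antisymm (by simpa [hx] using hpos _ x.val_mem) (sq_nonneg _)

/-- Riesz representation in the Hilbert space `(QT, q)`: the functional `φ ↦ ⟪χ, φ⟫` is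
bounded there because `‖φ‖² ≤ q(φ, φ)`. -/
theorem IsHermitianFormOn.exists_forall_eq_inner (hq : IsHermitianFormOn QT q)
    (hpos : ∀ ψ ∈ QT, ‖ψ‖ ^ 2 ≤ (q ψ ψ).re) (hcomp : IsCompleteForSqNorm QT fun ψ => (q ψ ψ).re)
    (χ : E) : ∃ ψ ∈ QT, ∀ φ ∈ QT, q φ ψ = ⟪φ, χ⟫_ℂ := by
  let := hq.innerCore hpos
  let : NormedAddCommGroup (FormSpace QT) := InnerProductSpace.Core.toNormedAddCommGroup (𝕜 := ℂ)
  let : InnerProductSpace ℂ (FormSpace QT) := InnerProductSpace.ofCore _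
  have hnorm (x : FormSpace QT) : ‖x‖ ^ 2 = (q x.val x.val).re :=
    (inner_self_eq_norm_sq (𝕜 := ℂ) x).symm
  have : CompleteSpace (FormSpace QT) := completeSpace_of_tendsto_norm_sq fun u hu => by
    obtain ⟨l, hl, hlim⟩ := hcomp (fun n => (u n).val) (fun n => (u n).val_mem)
      (by simpa only [hnorm, FormSpace.val_sub] using hu)
    exact ⟨.mk l hl, by simpa only [hnorm, FormSpace.val_sub, FormSpace.val_mk] using hlim⟩
  have hval_le (x : FormSpace QT) : ‖x.val‖ ≤ 1 * ‖x‖ := by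
    rw [one_mul, ← pow_le_pow_iff_left₀ (norm_nonneg _) (norm_nonneg _) two_ne_zero, hnorm]
    exact hpos _ x.val_mem
  let valL : FormSpace QT →L[ℂ] E :=
    LinearMap.mkContinuous ⟨⟨FormSpace.val, fun _ _ => rfl⟩, fun _ _ => rfl⟩ 1 hval_le
  set y := (InnerProductSpace.toDual ℂ (FormSpace QT)).symm ((innerSL ℂ χ).comp valL)
  refine ⟨y.val, y.val_mem, fun φ hφ => ?_⟩
  have hy : q y.val φ = ⟪χ, φ⟫_ℂ := InnerProductSpace.toDual_symm_apply (x := FormSpace.mk φ hφ)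
  rw [hq.conj_symm _ _ hφ y.val_mem, hy, inner_conj_symm]

end Riesz

section AssociatedOperator

variable {QT : Submodule ℂ E} {c : E → E → ℂ}

def IsSesqFormOn.operatorGraph (hc : IsSesqFormOn QT c) : Submodule ℂ (E × E) where
  carrier := {p | p.1 ∈ QT ∧ ∀ φ ∈ QT, c φ p.1 = ⟪φ, p.2⟫_ℂ}
  add_mem' {p p'} hp hp' := ⟨QT.add_mem hp.1 hp'.1, fun φ hφ => by
    rw [Prod.fst_add, Prod.snd_add, hc.add_right _ _ _ hφ hp.1 hp'.1, inner_add_right,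
      hp.2 φ hφ, hp'.2 φ hφ]⟩
  zero_mem' := ⟨QT.zero_mem, fun φ hφ => by
    rw [Prod.fst_zero, Prod.snd_zero, hc.map_zero_right hφ, inner_zero_right]⟩
  smul_mem' a p hp := ⟨QT.smul_mem a hp.1, fun φ hφ => by
    rw [Prod.smul_fst, Prod.smul_snd, hc.smul_right _ _ _ hφ hp.1, inner_smul_right,
      hp.2 φ hφ]⟩

theorem IsSesqFormOn.mem_operatorGraph (hc : IsSesqFormOn QT c) {ψ χ : E} :
    (ψ, χ) ∈ hc.operatorGraph ↔ ψ ∈ QT ∧ ∀ φ ∈ QT, c φ ψ = ⟪φ, χ⟫_ℂ :=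
  Iff.rfl

theorem IsSesqFormOn.eq_of_mem_operatorGraph (hc : IsSesqFormOn QT c)
    (hdense : Dense (QT : Set E)) {ψ χ χ' : E} (h : (ψ, χ) ∈ hc.operatorGraph)
    (h' : (ψ, χ') ∈ hc.operatorGraph) : χ = χ' :=
  hdense.eq_of_inner_right ℂ fun φ hφ => (h.2 φ hφ).symm.trans (h'.2 φ hφ)

theorem isAssociatedOperator_iff (hdense : Dense (QT : Set E)) (hc : IsSesqFormOn QT c)
    {A : E →ₗ.[ℂ] E} :
    IsAssociatedOperator QT c A ↔ A.graph = hc.operatorGraph ∧ Dense (A.domain : Set E) := by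
  constructor
  · rintro ⟨hsub, hdenseA, hrep, hmax⟩
    refine ⟨?_, hdenseA⟩
    ext ⟨ψ, χ⟩
    rw [LinearPMap.mem_graph_iff]
    constructor
    · rintro ⟨x, rfl, rfl⟩
      exact ⟨hsub x.2, fun φ hφ => (hrep x φ hφ).symm⟩
    · intro h
      refine ⟨⟨ψ, hmax ψ h.1 χ h.2⟩, rfl, hc.eq_of_mem_operatorGraph hdense ?_ h⟩
      exact ⟨h.1, fun φ hφ => (hrep ⟨ψ, _⟩ φ hφ).symm⟩
  · rintro ⟨hgraph, hdenseA⟩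
    have hmem (x : A.domain) : ((x : E), A x) ∈ hc.operatorGraph := hgraph ▸ A.mem_graph x
    refine ⟨fun ψ hψ => (hmem ⟨ψ, hψ⟩).1, hdenseA, fun x φ hφ => ((hmem x).2 φ hφ).symm,
      fun ψ hψ χ h => ?_⟩
    have hgr : (ψ, χ) ∈ A.graph := hgraph ▸ hc.mem_operatorGraph.2 ⟨hψ, h⟩
    exact LinearPMap.mem_domain_of_mem_graph hgr

theorem IsAssociatedOperator.unique (hdense : Dense (QT : Set E)) (hc : IsSesqFormOn QT c)
    {A A' : E →ₗ.[ℂ] E} (hA : IsAssociatedOperator QT c A)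
    (hA' : IsAssociatedOperator QT c A') : A = A' :=
  LinearPMap.eq_of_eq_graph <| ((isAssociatedOperator_iff hdense hc).1 hA).1.trans
    ((isAssociatedOperator_iff hdense hc).1 hA').1.symm

theorem IsAssociatedOperator.inner_map_eq {A : E →ₗ.[ℂ] E} (hA : IsAssociatedOperator QT c A)
    (hc : IsHermitianFormOn QT c) (x y : A.domain) :
    ⟪(x : E), A y⟫_ℂ = ⟪A x, (y : E)⟫_ℂ := by
  rw [hA.2.2.1 y _ (hA.1 x.2), hc.conj_symm _ _ (hA.1 x.2) (hA.1 y.2),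
    ← hA.2.2.1 x _ (hA.1 y.2), inner_conj_symm]

theorem IsAssociatedOperator.neg_mul_norm_sq_le {A : E →ₗ.[ℂ] E}
    (hA : IsAssociatedOperator QT c A) {μ : ℝ} (hlb : ∀ ψ ∈ QT, -μ * ‖ψ‖ ^ 2 ≤ (c ψ ψ).re)
    (x : A.domain) : -μ * ‖(x : E)‖ ^ 2 ≤ (⟪(x : E), A x⟫_ℂ).re := by
  rw [hA.2.2.1 x _ (hA.1 x.2)]
  exact hlb _ (hA.1 x.2)

theorem IsSesqFormOn.exists_add_smul_eq_of_graph_eq (hc : IsSesqFormOn QT c) {A : E →ₗ.[ℂ] E}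
    (hA : A.graph = hc.operatorGraph) {r : ℝ}
    (hR : ∀ χ, ∃ ψ ∈ QT, ∀ φ ∈ QT, c φ ψ + r * ⟪φ, ψ⟫_ℂ = ⟪φ, χ⟫_ℂ) (χ : E) :
    ∃ x : A.domain, A x + r • (x : E) = χ := by
  obtain ⟨ψ, hψ, h⟩ := hR χ
  have hgr : (ψ, χ - r • ψ) ∈ A.graph := hA ▸ hc.mem_operatorGraph.2 ⟨hψ, fun φ hφ => by
    rw [inner_sub_right, ← Complex.coe_smul, inner_smul_right]
    linear_combination h φ hφ⟩
  obtain ⟨x, hx, hAx⟩ := A.mem_graph_iff.1 hgr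
  exact ⟨x, by rw [hAx, hx, sub_add_cancel]⟩

theorem IsSesqFormOn.dense_domain_of_graph_eq [CompleteSpace E] (hc : IsSesqFormOn QT c)
    {A : E →ₗ.[ℂ] E} (hA : A.graph = hc.operatorGraph) {r : ℝ}
    (hpos : ∀ ψ ∈ QT, ‖ψ‖ ^ 2 ≤ (c ψ ψ).re + r * ‖ψ‖ ^ 2)
    (hsurj : ∀ χ, ∃ x : A.domain, A x + r • (x : E) = χ) : Dense (A.domain : Set E) := by
  rw [Submodule.dense_iff_topologicalClosure_eq_top, Submodule.topologicalClosure_eq_top_iff,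
    Submodule.eq_bot_iff]
  intro χ hχ
  obtain ⟨x, rfl⟩ := hsurj χ
  have hmem : ((x : E), A x) ∈ hc.operatorGraph := hA ▸ A.mem_graph x
  have hre : (⟪(x : E), A x + r • (x : E)⟫_ℂ).re = (c x x).re + r * ‖(x : E)‖ ^ 2 := by
    rw [inner_add_right, ← hmem.2 _ hmem.1, ← Complex.coe_smul, inner_smul_right,
      Complex.add_re, re_ofReal_mul_inner_self]
  rw [(Submodule.mem_orthogonal _ _).1 hχ _ x.2, Complex.zero_re] at hre
  have hx : x = 0 := Subtype.ext <| norm_eq_zero.mp <| (pow_eq_zero_iff two_ne_zero).mp <|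
    le_antisymm (hre ▸ hpos _ hmem.1) (sq_nonneg _)
  simp [hx]

theorem IsHermitianFormOn.exists_isAssociatedOperator [CompleteSpace E]
    (hdense : Dense (QT : Set E)) (hc : IsHermitianFormOn QT c) {μ : ℝ}
    (hcl : IsClosedSemiboundedForm QT c μ) :
    ∃ A : E →ₗ.[ℂ] E, IsAssociatedOperator QT c A ∧
      (∀ x y : A.domain, ⟪(x : E), A y⟫_ℂ = ⟪A x, (y : E)⟫_ℂ) ∧
      (∃ μ : ℝ, ∀ x : A.domain, -μ * ‖(x : E)‖ ^ 2 ≤ (⟪(x : E), A x⟫_ℂ).re) ∧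
      (∃ lam : ℝ, ∀ χ : E, ∃ x : A.domain, A x + lam • (x : E) = χ) ∧
      (∀ A' : E →ₗ.[ℂ] E, IsAssociatedOperator QT c A' → A' = A) := by
  obtain ⟨hlb, hcomp⟩ := hcl
  have hq := hc.add (isHermitianFormOn_ofReal_mul_inner (QT := QT) (μ + 1))
  have hpos (ψ : E) (hψ : ψ ∈ QT) : ‖ψ‖ ^ 2 ≤ (c ψ ψ).re + (μ + 1) * ‖ψ‖ ^ 2 := by
    linarith [hlb ψ hψ]
  have hriesz := hq.exists_forall_eq_inner
    (by simpa only [Complex.add_re, re_ofReal_mul_inner_self] using hpos)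
    (by simpa only [Complex.add_re, re_ofReal_mul_inner_self] using hcomp)
  have hgraph := Submodule.toLinearPMap_graph_eq hc.operatorGraph <| by
    rintro ⟨ψ, χ⟩ hp (rfl : ψ = 0)
    exact hc.eq_of_mem_operatorGraph hdense hp hc.operatorGraph.zero_mem
  have hsurj := hc.exists_add_smul_eq_of_graph_eq hgraph hriesz
  have hA : IsAssociatedOperator QT c hc.operatorGraph.toLinearPMap :=
    (isAssociatedOperator_iff hdense _).2 ⟨hgraph, hc.dense_domain_of_graph_eq hgraph hpos hsurj⟩
  exact ⟨_, hA, hA.inner_map_eq hc, ⟨μ, hA.neg_mul_norm_sq_le hlb⟩, ⟨μ + 1, hsurj⟩,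
    fun A' hA' => hA'.unique hdense hc.toIsSesqFormOn hA⟩

end AssociatedOperator

section RelativeBounds

def HasRelFormBound (QT : Submodule ℂ E) (s t : E → E → ℂ) (a : ℝ) : Prop :=
  ∃ b : ℝ, 0 ≤ b ∧ ∀ ψ ∈ QT, ‖s ψ ψ‖ ≤ a * (t ψ ψ).re + b * ‖ψ‖ ^ 2

variable {QT : Submodule ℂ E} {s s' t w : E → E → ℂ}

namespace HasRelFormBound

theorem add {a a' : ℝ} (hs : HasRelFormBound QT s t a) (hs' : HasRelFormBound QT s' t a') :
    HasRelFormBound QT (fun ψ φ => s ψ φ + s' ψ φ) t (a + a') := by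
  obtain ⟨b, hb0, hb⟩ := hs
  obtain ⟨b', hb0', hb'⟩ := hs'
  refine ⟨b + b', add_nonneg hb0 hb0', fun ψ hψ => ?_⟩
  calc ‖s ψ ψ + s' ψ ψ‖ ≤ ‖s ψ ψ‖ + ‖s' ψ ψ‖ := norm_add_le _ _
    _ ≤ a * (t ψ ψ).re + b * ‖ψ‖ ^ 2 + (a' * (t ψ ψ).re + b' * ‖ψ‖ ^ 2) :=
      add_le_add (hb ψ hψ) (hb' ψ hψ)
    _ = (a + a') * (t ψ ψ).re + (b + b') * ‖ψ‖ ^ 2 := by ring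

theorem base_add {a ε c : ℝ} (hs : HasRelFormBound QT s t a) (hw : HasRelFormBound QT w t ε)
    (hc : 0 ≤ c) (hca : c * (1 - ε) = a) :
    HasRelFormBound QT s (fun ψ φ => t ψ φ + w ψ φ) c := by
  obtain ⟨b, hb0, hb⟩ := hs
  obtain ⟨bw, hbw0, hbw⟩ := hw
  refine ⟨b + c * bw, by positivity, fun ψ hψ => ?_⟩
  have hw_re : -(ε * (t ψ ψ).re + bw * ‖ψ‖ ^ 2) ≤ (w ψ ψ).re :=
    neg_le_of_abs_le ((Complex.abs_re_le_norm _).trans (hbw ψ hψ))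
  calc ‖s ψ ψ‖ ≤ c * (1 - ε) * (t ψ ψ).re + b * ‖ψ‖ ^ 2 := hca ▸ hb ψ hψ
    _ ≤ c * ((t ψ ψ).re + (w ψ ψ).re + bw * ‖ψ‖ ^ 2) + b * ‖ψ‖ ^ 2 := by
      rw [mul_assoc]; gcongr; linarith
    _ = c * (t ψ ψ + w ψ ψ).re + (b + c * bw) * ‖ψ‖ ^ 2 := by rw [Complex.add_re]; ring

theorem isClosedSemiboundedForm_add {a μ : ℝ} (hst : HasRelFormBound QT s t a) (ha0 : 0 ≤ a)
    (ha1 : a < 1) (ht : IsClosedSemiboundedForm QT t μ) :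
    ∃ μ', IsClosedSemiboundedForm QT (fun ψ φ => t ψ φ + s ψ φ) μ' := by
  obtain ⟨b, hb0, hb⟩ := hst
  obtain ⟨ht_lb, ht_closed⟩ := ht
  have hs_re (ψ : E) (hψ : ψ ∈ QT) : |(s ψ ψ).re| ≤ a * (t ψ ψ).re + b * ‖ψ‖ ^ 2 :=
    (Complex.abs_re_le_norm _).trans (hb ψ hψ)
  have ht_shift (ψ : E) (hψ : ψ ∈ QT) : 0 ≤ (t ψ ψ).re + μ * ‖ψ‖ ^ 2 := by
    linarith [ht_lb ψ hψ]
  set μ' := (1 - a) * μ + b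
  set D := b + μ' + 1 - (1 + a) * μ
  refine ⟨μ', fun ψ hψ => ?_, ht_closed.of_le (c := 1 - a) (C := 1 + a + |D|) (by linarith)
    (fun ψ hψ => ?_) (fun ψ hψ => ?_)⟩
  · rw [Complex.add_re]
    nlinarith [abs_le.mp (hs_re ψ hψ), mul_nonneg (sub_nonneg.2 ha1.le) (ht_shift ψ hψ)]
  · rw [Complex.add_re]
    nlinarith [abs_le.mp (hs_re ψ hψ), mul_nonneg ha0 (sq_nonneg ‖ψ‖)]
  · rw [Complex.add_re]
    nlinarith [abs_le.mp (hs_re ψ hψ), mul_nonneg (abs_nonneg D) (ht_shift ψ hψ),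
      mul_nonneg ha0 (sq_nonneg ‖ψ‖), mul_le_mul_of_nonneg_right (le_abs_self D) (sq_nonneg ‖ψ‖)]

end HasRelFormBound

end RelativeBounds

/-- KLMN combination theorem: if `w` has infinitesimal `t`-bound and `v` has `t`-bound
`a_v < 1`, then (1) `v+w` has `t`-bound `< 1`; (2) `v` has `(t+w)`-bound `< 1`;
(3) `w` has infinitesimal `(t+v)`-bound; and the form sums `T∔(v+w)`, `(T∔v)∔w`,
`(T∔w)∔v` all coincide: there is a unique (lower semibounded, self-adjoint) operator
associated with the closed form `t+v+w` on `Q(T)`. -/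
theorem klmn_combination (QT : Submodule ℂ H) (hdense : Dense (QT : Set H))
    (t v w : H → H → ℂ)
    (ht_herm : ∀ ψ φ, ψ ∈ QT → φ ∈ QT → t ψ φ = starRingEnd ℂ (t φ ψ))
    (ht_add : ∀ ψ φ φ', ψ ∈ QT → φ ∈ QT → φ' ∈ QT → t ψ (φ + φ') = t ψ φ + t ψ φ')
    (ht_smul : ∀ (c : ℂ) (ψ φ), ψ ∈ QT → φ ∈ QT → t ψ (c • φ) = c * t ψ φ)
    (μt : ℝ) (ht_lb : ∀ ψ ∈ QT, -μt * ‖ψ‖ ^ 2 ≤ (t ψ ψ).re)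
    -- `t` is closed: `QT` is complete for the form norm `Re t(ψ,ψ) + (μt+1)‖ψ‖²`
    (ht_closed : ∀ ψ : ℕ → H, (∀ n, ψ n ∈ QT) →
      (∀ ε : ℝ, 0 < ε → ∃ N : ℕ, ∀ m n : ℕ, N ≤ m → N ≤ n →
        (t (ψ m - ψ n) (ψ m - ψ n)).re + (μt + 1) * ‖ψ m - ψ n‖ ^ 2 < ε) →
      ∃ ψl ∈ QT, Tendsto ψ atTop (nhds ψl) ∧
        Tendsto (fun n => (t (ψ n - ψl) (ψ n - ψl)).re + (μt + 1) * ‖ψ n - ψl‖ ^ 2)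
          atTop (nhds 0))
    (hv_herm : ∀ ψ φ, ψ ∈ QT → φ ∈ QT → v ψ φ = starRingEnd ℂ (v φ ψ))
    (hv_add : ∀ ψ φ φ', ψ ∈ QT → φ ∈ QT → φ' ∈ QT → v ψ (φ + φ') = v ψ φ + v ψ φ')
    (hv_smul : ∀ (c : ℂ) (ψ φ), ψ ∈ QT → φ ∈ QT → v ψ (c • φ) = c * v ψ φ)
    (hw_herm : ∀ ψ φ, ψ ∈ QT → φ ∈ QT → w ψ φ = starRingEnd ℂ (w φ ψ))
    (hw_add : ∀ ψ φ φ', ψ ∈ QT → φ ∈ QT → φ' ∈ QT → w ψ (φ + φ') = w ψ φ + w ψ φ')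
    (hw_smul : ∀ (c : ℂ) (ψ φ), ψ ∈ QT → φ ∈ QT → w ψ (c • φ) = c * w ψ φ)
    (hv_bound : ∃ a b : ℝ, 0 ≤ a ∧ a < 1 ∧ 0 ≤ b ∧
      ∀ ψ ∈ QT, ‖v ψ ψ‖ ≤ a * (t ψ ψ).re + b * ‖ψ‖ ^ 2)
    (hw_bound : ∀ ε : ℝ, 0 < ε → ∃ b : ℝ, 0 ≤ b ∧
      ∀ ψ ∈ QT, ‖w ψ ψ‖ ≤ ε * (t ψ ψ).re + b * ‖ψ‖ ^ 2) :
    (∃ a b : ℝ, 0 ≤ a ∧ a < 1 ∧ 0 ≤ b ∧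
      ∀ ψ ∈ QT, ‖v ψ ψ + w ψ ψ‖ ≤ a * (t ψ ψ).re + b * ‖ψ‖ ^ 2) ∧
    (∃ a b : ℝ, 0 ≤ a ∧ a < 1 ∧ 0 ≤ b ∧
      ∀ ψ ∈ QT, ‖v ψ ψ‖ ≤ a * ((t ψ ψ).re + (w ψ ψ).re) + b * ‖ψ‖ ^ 2) ∧
    (∀ ε : ℝ, 0 < ε → ∃ b : ℝ, 0 ≤ b ∧
      ∀ ψ ∈ QT, ‖w ψ ψ‖ ≤ ε * ((t ψ ψ).re + (v ψ ψ).re) + b * ‖ψ‖ ^ 2) ∧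
    (∃ A : H →ₗ.[ℂ] H,
      IsAssociatedOperator QT (fun ψ φ => t ψ φ + v ψ φ + w ψ φ) A ∧
      (∀ x y : A.domain, (inner ℂ (x : H) (A y) : ℂ) = inner ℂ (A x : H) (y : H)) ∧
      (∃ μ : ℝ, ∀ x : A.domain, -μ * ‖(x : H)‖ ^ 2 ≤ (inner ℂ (x : H) (A x) : ℂ).re) ∧
      (∃ lam : ℝ, ∀ χ : H, ∃ x : A.domain, A x + lam • (x : H) = χ) ∧
      (∀ A' : H →ₗ.[ℂ] H,
        IsAssociatedOperator QT (fun ψ φ => t ψ φ + v ψ φ + w ψ φ) A' → A' = A)) := by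
  obtain ⟨av, bv, hav0, hav1, hbv0, hv⟩ := hv_bound
  have hvt : HasRelFormBound QT v t av := ⟨bv, hbv0, hv⟩
  have hwt : ∀ ε > 0, HasRelFormBound QT w t ε := hw_bound
  have hε : 0 < (1 - av) / 2 := by linarith
  have hvwt := hvt.add (hwt _ hε)
  refine ⟨?_, ?_, fun ε hε => (hwt _ (by nlinarith)).base_add hvt hε.le rfl, ?_⟩
  · obtain ⟨b, hb0, hb⟩ := hvwt
    exact ⟨_, b, by linarith, by linarith, hb0, hb⟩
  · obtain ⟨b, hb0, hb⟩ := hvt.base_add (hwt _ hε) (c := 2 * av / (1 + av)) (by positivity)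
      (by field_simp; ring)
    exact ⟨_, b, by positivity, (div_lt_one (by linarith)).2 (by linarith), hb0, hb⟩
  · have ht : IsHermitianFormOn QT t := ⟨⟨ht_add, ht_smul⟩, ht_herm⟩
    have hv : IsHermitianFormOn QT v := ⟨⟨hv_add, hv_smul⟩, hv_herm⟩
    have hw : IsHermitianFormOn QT w := ⟨⟨hw_add, hw_smul⟩, hw_herm⟩
    obtain ⟨μ, hcl⟩ := hvwt.isClosedSemiboundedForm_add (by linarith) (by linarith)
      ⟨ht_lb, fun u hu hcauchy => (ht_closed u hu hcauchy).imp fun _ ⟨hl, _, hlim⟩ => ⟨hl, hlim⟩⟩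
    simp only [add_assoc]
    exact (ht.add (hv.add hw)).exists_isAssociatedOperator hdense hcl

end
end

section
/- For every unit vector ψ in an infinite-dimensional separable Hilbert space H and every integer N ≥ 1, there exist rank-N orthogonal projections q₀, q₁, …, q_{N−1}, r₁, …, r_{N−1} such that N|ψ⟩⟨ψ| = q₀ + Σ_{k=1}^{N−1}(q_k − r_k). -/
open scoped ENNReal
open Filter

noncomputable section

variable {H : Type*} [NormedAddCommGroup H] [InnerProductSpace ℂ H] [CompleteSpace H]

variable {ι : Type*} [Countable ι]

/-- `P` is an orthogonal projection of rank `N`. -/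
def IsRankNProj (N : ℕ) (P : H →L[ℂ] H) : Prop :=
  IsSelfAdjoint P ∧ P * P = P ∧
    Module.finrank ℂ (LinearMap.range (P : H →ₗ[ℂ] H)) = N

/-! Extend `ψ` to an orthonormal sequence `v` with `v 0 = ψ`; for a finite index set `s`,
`P s = ∑ i ∈ s, |v i⟩⟨v i|` is a projection of rank `#s`. Take `q₀ = P {0, …, N-1}` and, with a
block `C` of `N - 1` indices beyond `N - 1`, `q_k = P ({0} ∪ C)` and `r_k = P ({k} ∪ C)`. Then
`q_k - r_k = |ψ⟩⟨ψ| - |v k⟩⟨v k|`, and the terms `|v k⟩⟨v k|` cancel against those of `q₀`. -/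

open Finset

theorem Finset.nsmul_eq_sum_range_add_sum_Icc_sub_sum_insert {M : Type*} [AddCommGroup M]
    (f : ℕ → M) {N : ℕ} {C : Finset ℕ} (hC : Disjoint (range N) C) :
    N • f 0 = ∑ i ∈ range N, f i +
      ∑ k ∈ Icc 1 (N - 1), (∑ i ∈ insert 0 C, f i - ∑ i ∈ insert k C, f i) := by
  have hdiff : ∀ k ∈ Icc 1 (N - 1),
      ∑ i ∈ insert 0 C, f i - ∑ i ∈ insert k C, f i = f 0 - f k := by
    intro k hk
    have h0N : 0 ∈ range N := by simp only [mem_Icc, mem_range] at hk ⊢; omega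
    have hkN : k ∈ range N := by simp only [mem_Icc, mem_range] at hk ⊢; omega
    rw [sum_insert (disjoint_left.1 hC h0N), sum_insert (disjoint_left.1 hC hkN),
      add_sub_add_right_eq_sub]
  have hIcc : ∑ k ∈ Icc 1 (N - 1), (f 0 - f k) = ∑ k ∈ range N, (f 0 - f k) := by
    refine sum_subset (fun k => by simp only [mem_Icc, mem_range]; omega) fun k hk hk' => ?_
    obtain rfl : k = 0 := by simp only [mem_Icc, mem_range] at hk hk'; omega
    exact sub_self _
  rw [sum_congr rfl hdiff, hIcc, sum_sub_distrib, sum_const, card_range]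
  abel

theorem Orthonormal.sum_rankOne_eq_starProjection {E ι : Type*} [NormedAddCommGroup E]
    [InnerProductSpace ℂ E] [DecidableEq E] {v : ι → E} (hv : Orthonormal ℂ v) (s : Finset ι) :
    ∑ i ∈ s, rankOne (v i) = (Submodule.span ℂ (s.image v : Set E)).starProjection := by
  rw [(OrthonormalBasis.span hv s).starProjection_eq_sum_rankOne,
    ← s.sum_coe_sort (fun i => rankOne (v i))]
  simp [rankOne, InnerProductSpace.rankOne_def]

theorem isRankNProj_starProjection (U : Submodule ℂ H) [FiniteDimensional ℂ U] :
    IsRankNProj (Module.finrank ℂ U) U.starProjection :=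
  ⟨isSelfAdjoint_starProjection U, U.isIdempotentElem_starProjection.eq,
    (LinearEquiv.ofEq _ _ U.range_starProjection).finrank_eq⟩

theorem Orthonormal.isRankNProj_sum_rankOne {ι : Type*} {v : ι → H} (hv : Orthonormal ℂ v)
    (s : Finset ι) : IsRankNProj #s (∑ i ∈ s, rankOne (v i)) := by
  classical
  have hrank : Module.finrank ℂ (Submodule.span ℂ (s.image v : Set H)) = #s := by
    rw [Module.finrank_eq_card_basis (OrthonormalBasis.span hv s).toBasis, Fintype.card_coe]
  rw [hv.sum_rankOne_eq_starProjection, ← hrank]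
  exact isRankNProj_starProjection _

section

variable {𝕜 E : Type*} [RCLike 𝕜] [NormedAddCommGroup E] [InnerProductSpace 𝕜 E]

theorem HilbertBasis.infinite_of_not_finiteDimensional {w : Type*} (b : HilbertBasis w 𝕜 E)
    (hE : ¬ FiniteDimensional 𝕜 E) : Infinite w := by
  by_contra h
  have : Fintype w := @Fintype.ofFinite w (not_infinite_iff_finite.mp h)
  exact hE b.toOrthonormalBasis.toBasis.finiteDimensional_of_finite

theorem exists_orthonormal_nat_zero_eq [CompleteSpace E] (hE : ¬ FiniteDimensional 𝕜 E) {x : E}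
    (hx : ‖x‖ = 1) : ∃ v : ℕ → E, Orthonormal 𝕜 v ∧ v 0 = x := by
  classical
  have hx' : Orthonormal 𝕜 ((↑) : ({x} : Set E) → E) := by
    rw [orthonormal_subtype_iff_ite]
    rintro _ rfl _ rfl
    simp [hx]
  obtain ⟨w, b, hxw, hb⟩ := hx'.exists_hilbertBasis_extension
  have := b.infinite_of_not_finiteDimensional hE
  let x₀ : w := ⟨x, hxw rfl⟩
  let f : ℕ ↪ w := (Set.finite_singleton x₀).infinite_compl.natEmbedding.trans
    (Function.Embedding.subtype _)
  have hf : ∀ n, f n ≠ x₀ := fun n => ((Set.finite_singleton x₀).infinite_compl.natEmbedding _ n).2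
  let g : ℕ → w := fun | 0 => x₀ | n + 1 => f n
  have hg : g.Injective := by
    rintro (_ | m) (_ | n) h
    · rfl
    · exact absurd h.symm (hf n)
    · exact absurd h (hf m)
    · exact congrArg _ (f.injective h)
  exact ⟨(↑) ∘ g, hb ▸ b.orthonormal.comp g hg, rfl⟩

end

theorem rankOne_eq_affine_combination_of_projections_general
    (hinf : ¬ FiniteDimensional ℂ H)
    (ψ : H) (hψ : ‖ψ‖ = 1) (N : ℕ) :
    ∃ q r : ℕ → H →L[ℂ] H,
      IsRankNProj N (q 0) ∧
      (∀ k : ℕ, 1 ≤ k → k ≤ N - 1 → IsRankNProj N (q k) ∧ IsRankNProj N (r k)) ∧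
      (N : ℂ) • rankOne ψ = q 0 + ∑ k ∈ Finset.Icc 1 (N - 1), (q k - r k) := by
  obtain ⟨v, hv, rfl⟩ := exists_orthonormal_nat_zero_eq hinf hψ
  set C := Ico N (2 * N - 1)
  have hC : Disjoint (range N) C := by
    rw [range_eq_Ico]
    exact Ico_disjoint_Ico_consecutive 0 N _
  let P : Finset ℕ → H →L[ℂ] H := fun s => ∑ i ∈ s, rankOne (v i)
  refine ⟨fun k => P (if k = 0 then range N else insert 0 C), fun k => P (insert k C),
    by simpa using hv.isRankNProj_sum_rankOne (range N), fun k hk1 hkN => ?_, ?_⟩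
  · have hcard : ∀ j < N, #(insert j C) = N := fun j hj => by
      rw [card_insert_of_notMem (disjoint_left.1 hC (mem_range.2 hj)), Nat.card_Ico]
      omega
    simp only [if_neg (by omega : k ≠ 0)]
    exact ⟨hcard 0 (by omega) ▸ hv.isRankNProj_sum_rankOne _,
      hcard k (by omega) ▸ hv.isRankNProj_sum_rankOne _⟩
  · rw [Nat.cast_smul_eq_nsmul,
      nsmul_eq_sum_range_add_sum_Icc_sub_sum_insert (fun i => rankOne (v i)) hC]
    refine congrArg _ (sum_congr rfl fun k hk => ?_)
    have hk0 : k ≠ 0 := by simp only [mem_Icc] at hk; omega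
    simp only [P, if_neg hk0]

/-- For every unit vector `ψ` and `N ≥ 1` there are rank-`N` orthogonal projections
`q₀, …, q_{N-1}, r₁, …, r_{N-1}` with `N|ψ⟩⟨ψ| = q₀ + Σ_{k=1}^{N-1} (q_k - r_k)`. -/
theorem rankOne_eq_affine_combination_of_projections
    [TopologicalSpace.SeparableSpace H] (hinf : ¬ FiniteDimensional ℂ H)
    (ψ : H) (hψ : ‖ψ‖ = 1) (N : ℕ) (hN : 1 ≤ N) :
    ∃ q r : ℕ → H →L[ℂ] H,
      IsRankNProj N (q 0) ∧
      (∀ k : ℕ, 1 ≤ k → k ≤ N - 1 → IsRankNProj N (q k) ∧ IsRankNProj N (r k)) ∧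
      (N : ℂ) • rankOne ψ = q 0 + ∑ k ∈ Finset.Icc 1 (N - 1), (q k - r k) :=
  rankOne_eq_affine_combination_of_projections_general hinf ψ hψ N

end
end
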